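/- Let C be a 3-dimensional EACP on K³ with basis {h₁,h₂,r} and multiplication h₁·r = r·h₁ = (1/2)(a•h₁ + b•h₂ + A•r), h₂·r = r·h₂ = (1/2)(c•h₁ + d•h₂ + B•r), all other products of basis elements zero. If the subspace C² spanned by all products x·y (x,y ∈ C) has dimension 1 (equivalently, the vectors (a,b,A) and (c,d,B) are linearly dependent and not both zero), then C is isomorphic as a K-algebra (via a linear bijection preserving the multiplication) to one of the following three pairwise non-isomorphic algebras: 𝒞₁ with h₁·r = r and all other products zero; 𝒞₂ with h₁·r = h₂ and all other products zero; 𝒞₃ with h₁·r = h₁ + r and all other products zero (in each, r·h₁ = h₁·r). -/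
import Mathlib


/-- Multiplication of the 3-dimensional EACP on `K × K × K` with natural basis
`h₁ = (1,0,0)`, `h₂ = (0,1,0)`, `r = (0,0,1)`:
`h₁·r = r·h₁ = (1/2)(a•h₁ + b•h₂ + A•r)`, `h₂·r = r·h₂ = (1/2)(c•h₁ + d•h₂ + B•r)`,
all other products of basis elements zero. -/
def eacpMul3 {K : Type*} [Field K] (a b A c d B : K) (x y : K × K × K) : K × K × K :=
  ((1 / 2 : K) * (x.2.2 * y.1 + x.1 * y.2.2)) • ((a, b, A) : K × K × K) +
    ((1 / 2 : K) * (x.2.2 * y.2.1 + x.2.1 * y.2.2)) • ((c, d, B) : K × K × K)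

/-- Two bilinear multiplications on `K × K × K` give isomorphic algebras if some linear
bijection intertwines them. -/
def IsAlgIso3 {K : Type*} [Field K] (m₁ m₂ : K × K × K → K × K × K → K × K × K) : Prop :=
  ∃ φ : (K × K × K) ≃ₗ[K] (K × K × K), ∀ x y, φ (m₁ x y) = m₂ (φ x) (φ y)

section Aux

variable {K : Type*} [Field K]

/-- Explicit linear map on `K × K × K` given by a 3×3 matrix of coefficients. -/
def lmat3 (p q r s t u v w z : K) : (K × K × K) →ₗ[K] (K × K × K) where
  toFun x := (p*x.1+q*x.2.1+r*x.2.2, s*x.1+t*x.2.1+u*x.2.2, v*x.1+w*x.2.1+z*x.2.2)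
  map_add' x y := by refine Prod.ext ?_ (Prod.ext ?_ ?_) <;> simp <;> ring
  map_smul' c x := by refine Prod.ext ?_ (Prod.ext ?_ ?_) <;> simp <;> ring

/-- Build a linear equivalence from two mutually inverse linear maps. -/
def mkEquiv (f g : (K × K × K) →ₗ[K] (K × K × K)) (h1 : ∀ x, f (g x) = x)
    (h2 : ∀ x, g (f x) = x) : (K × K × K) ≃ₗ[K] (K × K × K) :=
  LinearEquiv.ofLinear f g (LinearMap.ext h1) (LinearMap.ext h2)

lemma isAlgIso3_trans {m₁ m₂ m₃ : K × K × K → K × K × K → K × K × K}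
    (h : IsAlgIso3 m₁ m₂) (h' : IsAlgIso3 m₂ m₃) : IsAlgIso3 m₁ m₃ := by
  obtain ⟨φ, hφ⟩ := h; obtain ⟨ψ, hψ⟩ := h'
  exact ⟨φ.trans ψ, fun x y => by simp [LinearEquiv.trans_apply, hφ, hψ]⟩

lemma iso_swap12 (c d B : K) :
    IsAlgIso3 (eacpMul3 0 0 0 c d B) (eacpMul3 d c B 0 0 0) := by
  refine ⟨mkEquiv (lmat3 0 1 0 1 0 0 0 0 1) (lmat3 0 1 0 1 0 0 0 0 1) ?_ ?_, ?_⟩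
  · intro x; simp [lmat3]
  · intro x; simp [lmat3]
  · intro x y
    simp only [mkEquiv, LinearEquiv.ofLinear_apply, lmat3, eacpMul3, LinearMap.coe_mk,
      AddHom.coe_mk, Prod.smul_mk, Prod.mk_add_mk, smul_eq_mul]
    refine Prod.ext ?_ (Prod.ext ?_ ?_) <;> simp <;> ring

lemma iso_tau (a b A μ : K) :
    IsAlgIso3 (eacpMul3 a b A (μ*a) (μ*b) (μ*A)) (eacpMul3 (a+μ*b) b A 0 0 0) := by
  refine ⟨mkEquiv (lmat3 1 μ 0 0 1 0 0 0 1) (lmat3 1 (-μ) 0 0 1 0 0 0 1) ?_ ?_, ?_⟩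
  · intro x; refine Prod.ext ?_ (Prod.ext ?_ ?_) <;> simp [lmat3]
  · intro x; refine Prod.ext ?_ (Prod.ext ?_ ?_) <;> simp [lmat3]
  · intro x y
    simp only [mkEquiv, LinearEquiv.ofLinear_apply, lmat3, eacpMul3, LinearMap.coe_mk,
      AddHom.coe_mk, Prod.smul_mk, Prod.mk_add_mk, smul_eq_mul]
    refine Prod.ext ?_ (Prod.ext ?_ ?_) <;> simp <;> ring

set_option maxHeartbeats 1000000 in
lemma classify (h2 : (2:K) ≠ 0) (a b A : K) (h : ¬(a = 0 ∧ b = 0 ∧ A = 0)) :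
    IsAlgIso3 (eacpMul3 a b A 0 0 0) (eacpMul3 0 0 2 0 0 0) ∨
    IsAlgIso3 (eacpMul3 a b A 0 0 0) (eacpMul3 0 2 0 0 0 0) ∨
    IsAlgIso3 (eacpMul3 a b A 0 0 0) (eacpMul3 2 0 2 0 0 0) := by
  by_cases ha : a = 0 <;> by_cases hA : A = 0
  · -- a = 0, A = 0, b ≠ 0 : C₂
    have hb : b ≠ 0 := by tauto
    subst ha hA
    refine Or.inr (Or.inl ⟨mkEquiv (lmat3 1 0 0 0 (2/b) 0 0 0 1)
      (lmat3 1 0 0 0 (b/2) 0 0 0 1) ?_ ?_, ?_⟩)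
    · intro x; refine Prod.ext ?_ (Prod.ext ?_ ?_) <;> simp [lmat3] <;> field_simp <;> ring
    · intro x; refine Prod.ext ?_ (Prod.ext ?_ ?_) <;> simp [lmat3] <;> field_simp <;> ring
    · intro x y
      simp only [mkEquiv, LinearEquiv.ofLinear_apply, lmat3, eacpMul3, LinearMap.coe_mk,
        AddHom.coe_mk, Prod.smul_mk, Prod.mk_add_mk, smul_eq_mul]
      refine Prod.ext ?_ (Prod.ext ?_ ?_) <;> field_simp <;> ring
  · -- a = 0, A ≠ 0 : C₁
    subst ha
    refine Or.inl ⟨mkEquiv (lmat3 (A/2) 0 0 0 1 (-(b/A)) 0 0 (2/A))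
      (lmat3 (2/A) 0 0 0 1 (b/2) 0 0 (A/2)) ?_ ?_, ?_⟩
    · intro x; refine Prod.ext ?_ (Prod.ext ?_ ?_) <;> simp [lmat3] <;> field_simp <;> ring
    · intro x; refine Prod.ext ?_ (Prod.ext ?_ ?_) <;> simp [lmat3] <;> field_simp <;> ring
    · intro x y
      simp only [mkEquiv, LinearEquiv.ofLinear_apply, lmat3, eacpMul3, LinearMap.coe_mk,
        AddHom.coe_mk, Prod.smul_mk, Prod.mk_add_mk, smul_eq_mul]
      refine Prod.ext ?_ (Prod.ext ?_ ?_) <;> field_simp <;> ring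
  · -- a ≠ 0, A = 0 : C₁
    subst hA
    refine Or.inl ⟨mkEquiv (lmat3 0 0 (a/2) (-(b/a)) 1 0 (1/a) 0 0)
      (lmat3 0 0 a 0 1 b (2/a) 0 0) ?_ ?_, ?_⟩
    · intro x; refine Prod.ext ?_ (Prod.ext ?_ ?_) <;> simp [lmat3] <;> field_simp <;> ring
    · intro x; refine Prod.ext ?_ (Prod.ext ?_ ?_) <;> simp [lmat3] <;> field_simp <;> ring
    · intro x y
      simp only [mkEquiv, LinearEquiv.ofLinear_apply, lmat3, eacpMul3, LinearMap.coe_mk,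
        AddHom.coe_mk, Prod.smul_mk, Prod.mk_add_mk, smul_eq_mul]
      refine Prod.ext ?_ (Prod.ext ?_ ?_) <;> field_simp <;> ring
  · -- a ≠ 0, A ≠ 0 : C₃
    refine Or.inr (Or.inr ⟨mkEquiv (lmat3 0 0 (a/2) (-(b/a)) 1 0 (A/2) 0 0)
      (lmat3 0 0 (2/A) 0 1 (2*b/(a*A)) (2/a) 0 0) ?_ ?_, ?_⟩)
    · intro x; refine Prod.ext ?_ (Prod.ext ?_ ?_) <;> simp [lmat3] <;> field_simp <;> ring
    · intro x; refine Prod.ext ?_ (Prod.ext ?_ ?_) <;> simp [lmat3] <;> field_simp <;> ring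
    · intro x y
      simp only [mkEquiv, LinearEquiv.ofLinear_apply, lmat3, eacpMul3, LinearMap.coe_mk,
        AddHom.coe_mk, Prod.smul_mk, Prod.mk_add_mk, smul_eq_mul]
      refine Prod.ext ?_ (Prod.ext ?_ ?_) <;> field_simp <;> ring

lemma span_eq (h2 : (2:K) ≠ 0) (a b A c d B : K) :
    Submodule.span K {z : K × K × K | ∃ x y, z = eacpMul3 a b A c d B x y} =
    Submodule.span K {((a,b,A) : K × K × K), (c,d,B)} := by
  apply le_antisymm <;> rw [Submodule.span_le]
  · rintro z ⟨x, y, rfl⟩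
    exact add_mem (Submodule.smul_mem _ _ (Submodule.subset_span (by simp)))
      (Submodule.smul_mem _ _ (Submodule.subset_span (by simp)))
  · rintro z hz
    simp only [Set.mem_insert_iff, Set.mem_singleton_iff] at hz
    rcases hz with rfl | rfl
    · refine Submodule.subset_span ⟨(1,0,0), (0,0,2), ?_⟩
      refine Prod.ext ?_ (Prod.ext ?_ ?_) <;> simp [eacpMul3] <;> field_simp
    · refine Submodule.subset_span ⟨(0,1,0), (0,0,2), ?_⟩
      refine Prod.ext ?_ (Prod.ext ?_ ?_) <;> simp [eacpMul3] <;> field_simp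

lemma extract (h2 : (2:K) ≠ 0) (a b A c d B : K)
    (hdim : Module.finrank K
        (Submodule.span K {z : K × K × K | ∃ x y, z = eacpMul3 a b A c d B x y}) = 1) :
    (((a,b,A) : K × K × K) = 0 ∧ ((c,d,B) : K × K × K) ≠ 0) ∨
      (((a,b,A) : K × K × K) ≠ 0 ∧
        ∃ μ : K, ((c,d,B) : K × K × K) = μ • ((a,b,A) : K × K × K)) := by
  rw [span_eq h2] at hdim
  by_cases hv : ((a,b,A) : K × K × K) = 0
  · left
    refine ⟨hv, fun hw => ?_⟩
    rw [hv, hw, Set.pair_eq_singleton, Submodule.span_zero_singleton, finrank_bot] at hdim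
    exact one_ne_zero hdim.symm
  · right
    refine ⟨hv, ?_⟩
    by_contra hns
    push_neg at hns
    have hwnot : ((c,d,B) : K × K × K) ∉ Submodule.span K {((a,b,A) : K × K × K)} := by
      rw [Submodule.mem_span_singleton]
      rintro ⟨μ, hμ⟩
      exact hns μ hμ.symm
    have hle : Submodule.span K {((a,b,A) : K × K × K)} ≤
        Submodule.span K {((a,b,A) : K × K × K), (c,d,B)} := Submodule.span_mono (by simp)
    have hwmem : ((c,d,B) : K × K × K) ∈
        Submodule.span K {((a,b,A) : K × K × K), (c,d,B)} := Submodule.subset_span (by simp)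
    have hlt : Submodule.span K {((a,b,A) : K × K × K)} <
        Submodule.span K {((a,b,A) : K × K × K), (c,d,B)} :=
      hle.lt_of_ne (fun h => hwnot (h ▸ hwmem))
    have hfin := Submodule.finrank_lt_finrank_of_lt hlt
    rw [finrank_span_singleton hv, hdim] at hfin
    exact lt_irrefl 1 hfin

lemma not_iso_12 (h2 : (2:K) ≠ 0) :
    ¬ IsAlgIso3 (eacpMul3 (0:K) 0 2 0 0 0) (eacpMul3 0 2 0 0 0 0) := by
  rintro ⟨φ, hφ⟩
  have h1 : eacpMul3 (0:K) 0 2 0 0 0 (1,0,0)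
      (eacpMul3 (0:K) 0 2 0 0 0 (1,0,0) (0,0,1)) = (0,0,1) := by
    refine Prod.ext ?_ (Prod.ext ?_ ?_) <;> simp [eacpMul3] <;> field_simp
  have h0 : ∀ u v w : K × K × K,
      eacpMul3 (0:K) 2 0 0 0 0 u (eacpMul3 (0:K) 2 0 0 0 0 v w) = 0 := by
    intro u v w
    refine Prod.ext ?_ (Prod.ext ?_ ?_) <;> simp [eacpMul3]
  have key := hφ (1,0,0) (eacpMul3 (0:K) 0 2 0 0 0 (1,0,0) (0,0,1))
  rw [h1, hφ (1,0,0) (0,0,1), h0] at key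
  have : ((0,0,1) : K × K × K) = 0 := φ.injective (by rw [key, map_zero])
  simpa [Prod.ext_iff] using this

lemma not_iso_13 (h2 : (2:K) ≠ 0) :
    ¬ IsAlgIso3 (eacpMul3 (0:K) 0 2 0 0 0) (eacpMul3 2 0 2 0 0 0) := by
  rintro ⟨φ, hφ⟩
  set e : K × K × K := (1/2, 0, 1/2) with he_def
  have he : eacpMul3 (2:K) 0 2 0 0 0 e e = e := by
    refine Prod.ext ?_ (Prod.ext ?_ ?_) <;> simp [eacpMul3, he_def] <;> field_simp <;> ring
  have h1 : φ (eacpMul3 (0:K) 0 2 0 0 0 (φ.symm e) (φ.symm e)) = φ (φ.symm e) := by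
    rw [hφ, φ.apply_symm_apply, he]
  have h2' : eacpMul3 (0:K) 0 2 0 0 0 (φ.symm e) (φ.symm e) = φ.symm e := φ.injective h1
  set u := φ.symm e with hu
  have hu0 : u = 0 := by
    rw [Prod.ext_iff, Prod.ext_iff] at h2'
    simp only [eacpMul3] at h2'
    obtain ⟨e1, e2, e3⟩ := h2'
    simp at e1 e2 e3
    refine Prod.ext ?_ (Prod.ext ?_ ?_) <;> simp [← e1, ← e2]
    rw [← e3, ← e1]; ring
  have : e = 0 := by rw [← φ.apply_symm_apply e, ← hu, hu0, map_zero]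
  rw [he_def, Prod.ext_iff] at this
  exact one_div_ne_zero h2 this.1

lemma not_iso_23 (h2 : (2:K) ≠ 0) :
    ¬ IsAlgIso3 (eacpMul3 (0:K) 2 0 0 0 0) (eacpMul3 2 0 2 0 0 0) := by
  rintro ⟨φ, hφ⟩
  set e : K × K × K := (1/2, 0, 1/2) with he_def
  have he : eacpMul3 (2:K) 0 2 0 0 0 e e = e := by
    refine Prod.ext ?_ (Prod.ext ?_ ?_) <;> simp [eacpMul3, he_def] <;> field_simp <;> ring
  have h1 : φ (eacpMul3 (0:K) 2 0 0 0 0 (φ.symm e) (φ.symm e)) = φ (φ.symm e) := by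
    rw [hφ, φ.apply_symm_apply, he]
  have h2' : eacpMul3 (0:K) 2 0 0 0 0 (φ.symm e) (φ.symm e) = φ.symm e := φ.injective h1
  set u := φ.symm e with hu
  have hu0 : u = 0 := by
    rw [Prod.ext_iff, Prod.ext_iff] at h2'
    simp only [eacpMul3] at h2'
    obtain ⟨e1, e2, e3⟩ := h2'
    simp at e1 e2 e3
    refine Prod.ext ?_ (Prod.ext ?_ ?_) <;> simp [← e1, ← e3]
    rw [← e2, ← e1]; ring
  have : e = 0 := by rw [← φ.apply_symm_apply e, ← hu, hu0, map_zero]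
  rw [he_def, Prod.ext_iff] at this
  exact one_div_ne_zero h2 this.1

end Aux

theorem eacp3_classification_dim_one {K : Type*} [Field K] (h2 : (2 : K) ≠ 0)
    (a b A c d B : K)
    (hdim : Module.finrank K
        (Submodule.span K {z : K × K × K | ∃ x y, z = eacpMul3 a b A c d B x y}) = 1) :
    (IsAlgIso3 (eacpMul3 a b A c d B) (eacpMul3 0 0 2 0 0 0) ∨
        IsAlgIso3 (eacpMul3 a b A c d B) (eacpMul3 0 2 0 0 0 0) ∨
        IsAlgIso3 (eacpMul3 a b A c d B) (eacpMul3 2 0 2 0 0 0)) ∧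
      ¬ IsAlgIso3 (eacpMul3 (0:K) 0 2 0 0 0) (eacpMul3 0 2 0 0 0 0) ∧
      ¬ IsAlgIso3 (eacpMul3 (0:K) 0 2 0 0 0) (eacpMul3 2 0 2 0 0 0) ∧
      ¬ IsAlgIso3 (eacpMul3 (0:K) 2 0 0 0 0) (eacpMul3 2 0 2 0 0 0) := by
  refine ⟨?_, not_iso_12 h2, not_iso_13 h2, not_iso_23 h2⟩
  rcases extract h2 a b A c d B hdim with ⟨hv, hw⟩ | ⟨hv, μ, hw⟩
  · -- (a,b,A) = 0, (c,d,B) ≠ 0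
    simp only [Prod.ext_iff, Prod.mk_eq_zero] at hv
    obtain ⟨ha, hb, hA⟩ := hv
    subst ha; subst hb; subst hA
    have hnz : ¬(d = 0 ∧ c = 0 ∧ B = 0) := by
      simp only [Prod.ext_iff, Prod.mk_eq_zero, ne_eq] at hw
      tauto
    rcases classify h2 d c B hnz with h | h | h
    · exact Or.inl (isAlgIso3_trans (iso_swap12 c d B) h)
    · exact Or.inr (Or.inl (isAlgIso3_trans (iso_swap12 c d B) h))
    · exact Or.inr (Or.inr (isAlgIso3_trans (iso_swap12 c d B) h))
  · -- (c,d,B) = μ • (a,b,A)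
    simp only [Prod.smul_mk, smul_eq_mul, Prod.mk.injEq] at hw
    obtain ⟨hc, hd, hB⟩ := hw
    subst hc; subst hd; subst hB
    have hv' : ¬(a = 0 ∧ b = 0 ∧ A = 0) := by
      simp only [Prod.ext_iff, Prod.mk_eq_zero, ne_eq] at hv
      tauto
    have hnz : ¬(a + μ*b = 0 ∧ b = 0 ∧ A = 0) := by
      rintro ⟨hab, hb, hA⟩
      rw [hb, mul_zero, add_zero] at hab
      exact hv' ⟨hab, hb, hA⟩
    rcases classify h2 (a + μ*b) b A hnz with h | h | h
    · exact Or.inl (isAlgIso3_trans (iso_tau a b A μ) h)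
    · exact Or.inr (Or.inl (isAlgIso3_trans (iso_tau a b A μ) h))
    · exact Or.inr (Or.inr (isAlgIso3_trans (iso_tau a b A μ) h))
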